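/- arXiv:2406.08569 — 3 statements merged into one kernel-verified Lean document; each statement's English description precedes it below -/
import Mathlib

section
/- Let Δ > 0, μ > 0, and set σ = Δ/μ. Then for all a, b ∈ ℝ with |a − b| ≤ Δ, all ε ≥ 0, and every measurable set S ⊆ ℝ, the Gaussian measures with variance σ² satisfy N(a, σ²)(S) ≤ e^ε · N(b, σ²)(S) + δ_μ(ε), where δ_μ(ε) = Φ(−ε/μ + μ/2) − e^ε · Φ(−ε/μ − μ/2). (The Gaussian mechanism with noise scale σ = Δ/μ is μ-GDP.) -/
open MeasureTheory ProbabilityTheory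

/-- The cumulative distribution function Φ of the standard normal distribution on ℝ. -/
noncomputable def stdNormalCDF (x : ℝ) : ℝ :=
  ((gaussianReal 0 1) (Set.Iic x)).toReal

/-- The Gaussian privacy curve δ_μ(ε) = Φ(−ε/μ + μ/2) − e^ε · Φ(−ε/μ − μ/2). -/
noncomputable def gdpCurve (μ ε : ℝ) : ℝ :=
  stdNormalCDF (-ε / μ + μ / 2) - Real.exp ε * stdNormalCDF (-ε / μ - μ / 2)

open Real Set
open scoped ENNReal NNReal

/-!
Rescaling by `σ` and translating reduces the claim to `N(0, 1)` against `N(c, 1)` with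
`|c| ≤ μ`, and reflecting `x ↦ -x` to `0 < c`. For any densities `p`, `q` and `e ≥ 0`,
`P(S) ≤ e Q(S) + ∫ (p - e q)⁺`; for the two unit Gaussians the likelihood ratio
`q / p = exp (c x - c² / 2)` shows that `p - e^ε q` is nonnegative exactly on
`(-∞, -ε / c + c / 2]`, and integrating it there gives `δ_c(ε)`. Finally `δ_c(ε)` increases
with `c`: its derivative in `c` is the density `φ(-ε / c + c / 2) > 0`.
-/

def PrivacyIneq {α : Type*} [MeasurableSpace α] (ε δ : ℝ) (P Q : Measure α) : Prop :=
  ∀ S, MeasurableSet S → P S ≤ ENNReal.ofReal (exp ε) * Q S + ENNReal.ofReal δ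

namespace PrivacyIneq

variable {α β : Type*} [MeasurableSpace α] [MeasurableSpace β] {ε δ δ' : ℝ} {P Q : Measure α}

lemma mono (h : PrivacyIneq ε δ P Q) (hδ : δ ≤ δ') : PrivacyIneq ε δ' P Q :=
  fun S hS => (h S hS).trans (by gcongr)

lemma map (h : PrivacyIneq ε δ P Q) {f : α → β} (hf : Measurable f) :
    PrivacyIneq ε δ (P.map f) (Q.map f) := fun S hS => by
  simpa only [Measure.map_apply hf hS] using h _ (hf hS)

lemma refl (hε : 0 ≤ ε) (P : Measure α) : PrivacyIneq ε δ P P := fun S _ =>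
  calc P S = 1 * P S := (one_mul _).symm
    _ ≤ ENNReal.ofReal (exp ε) * P S := by
      gcongr
      exact ENNReal.one_le_ofReal.2 (one_le_exp hε)
    _ ≤ _ := le_self_add

end PrivacyIneq

lemma withDensity_apply_le_mul_add_lintegral_tsub {α : Type*} [MeasurableSpace α]
    (ν : Measure α) (p : α → ℝ≥0∞) {q : α → ℝ≥0∞} (hq : Measurable q) (e : ℝ≥0∞)
    {S : Set α} (hS : MeasurableSet S) :
    ν.withDensity p S ≤ e * ν.withDensity q S + ∫⁻ x, p x - e * q x ∂ν := by
  rw [withDensity_apply _ hS, withDensity_apply _ hS, ← lintegral_const_mul e hq]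
  calc ∫⁻ x in S, p x ∂ν ≤ ∫⁻ x in S, e * q x + (p x - e * q x) ∂ν :=
        lintegral_mono fun _ => le_add_tsub
    _ = ∫⁻ x in S, e * q x ∂ν + ∫⁻ x in S, p x - e * q x ∂ν :=
        lintegral_add_left (hq.const_mul e) _
    _ ≤ _ := add_le_add le_rfl (setLIntegral_le_lintegral _ _)

lemma hasDerivAt_integral_Iic {f : ℝ → ℝ} (hf : Continuous f) (hfi : Integrable f) (x : ℝ) :
    HasDerivAt (fun y => ∫ t in Iic y, f t) (f x) x := by
  have hsplit :
      (fun y => ∫ t in Iic y, f t) = fun y => (∫ t in Iic 0, f t) + ∫ t in 0..y, f t := by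
    funext y
    rw [← intervalIntegral.integral_Iic_sub_Iic hfi.integrableOn hfi.integrableOn]
    ring
  rw [hsplit]
  exact (intervalIntegral.integral_hasDerivAt_right hfi.intervalIntegrable
    hf.stronglyMeasurable.stronglyMeasurableAtFilter hf.continuousAt).const_add _

lemma continuous_gaussianPDFReal (m : ℝ) (v : ℝ≥0) : Continuous (gaussianPDFReal m v) := by
  rw [gaussianPDFReal_def]
  fun_prop

lemma stdNormalCDF_eq_integral (x : ℝ) :
    stdNormalCDF x = ∫ t in Iic x, gaussianPDFReal 0 1 t := by
  rw [stdNormalCDF, gaussianReal_apply_eq_integral 0 one_ne_zero, ENNReal.toReal_ofReal]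
  exact setIntegral_nonneg measurableSet_Iic fun t _ => gaussianPDFReal_nonneg _ _ _

lemma hasDerivAt_stdNormalCDF (x : ℝ) : HasDerivAt stdNormalCDF (gaussianPDFReal 0 1 x) x := by
  simpa only [← funext stdNormalCDF_eq_integral] using
    hasDerivAt_integral_Iic (continuous_gaussianPDFReal 0 1) (integrable_gaussianPDFReal 0 1) x

lemma gaussianReal_Iic (m x : ℝ) :
    gaussianReal m 1 (Iic x) = ENNReal.ofReal (stdNormalCDF (x - m)) := by
  rw [stdNormalCDF, ENNReal.ofReal_toReal (measure_ne_top _ _), ← zero_add m,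
    ← gaussianReal_map_add_const, Measure.map_apply (measurable_add_const m) measurableSet_Iic,
    zero_add, preimage_add_const_Iic]

lemma gaussianPDFReal_eq_exp_mul (c x : ℝ) :
    gaussianPDFReal c 1 x = exp (c * x - c ^ 2 / 2) * gaussianPDFReal 0 1 x := by
  simp only [gaussianPDFReal, NNReal.coe_one, mul_one, sub_zero]
  rw [mul_left_comm, ← exp_add]
  ring_nf

lemma exp_mul_gaussianPDFReal_le_iff {c : ℝ} (hc : 0 < c) (ε x : ℝ) :
    exp ε * gaussianPDFReal c 1 x ≤ gaussianPDFReal 0 1 x ↔ x ≤ -ε / c + c / 2 := by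
  rw [gaussianPDFReal_eq_exp_mul, ← mul_assoc, ← exp_add,
    mul_le_iff_le_one_left (gaussianPDFReal_pos _ _ _ one_ne_zero), exp_le_one_iff,
    show -ε / c + c / 2 = (c ^ 2 / 2 - ε) / c by field_simp; ring, le_div_iff₀ hc]
  constructor <;> intro h <;> linarith

lemma ofReal_exp_mul_gaussianPDF_le_iff {c : ℝ} (hc : 0 < c) (ε x : ℝ) :
    ENNReal.ofReal (exp ε) * gaussianPDF c 1 x ≤ gaussianPDF 0 1 x ↔ x ≤ -ε / c + c / 2 := by
  rw [gaussianPDF, gaussianPDF, ← ENNReal.ofReal_mul (exp_nonneg _),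
    ENNReal.ofReal_le_ofReal_iff (gaussianPDFReal_nonneg _ _ _), exp_mul_gaussianPDFReal_le_iff hc]

lemma lintegral_gaussianPDF_tsub {c : ℝ} (hc : 0 < c) (ε : ℝ) :
    ∫⁻ x, gaussianPDF 0 1 x - ENNReal.ofReal (exp ε) * gaussianPDF c 1 x =
      ENNReal.ofReal (gdpCurve c ε) := by
  set t := -ε / c + c / 2 with ht
  have htc : t - c = -ε / c - c / 2 := by rw [ht]; ring
  have hle : ∀ x ∈ Iic t, ENNReal.ofReal (exp ε) * gaussianPDF c 1 x ≤ gaussianPDF 0 1 x :=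
    fun x hx => (ofReal_exp_mul_gaussianPDF_le_iff hc ε x).2 hx
  have hsupp : (fun x => gaussianPDF 0 1 x - ENNReal.ofReal (exp ε) * gaussianPDF c 1 x).support
      ⊆ Iic t := Function.support_subset_iff'.2 fun x hx =>
    tsub_eq_zero_of_le (not_le.1 (mt (ofReal_exp_mul_gaussianPDF_le_iff hc ε x).1 hx)).le
  have hfin : ∫⁻ x in Iic t, ENNReal.ofReal (exp ε) * gaussianPDF c 1 x ≠ ⊤ := by
    rw [lintegral_const_mul _ (measurable_gaussianPDF c 1), ← gaussianReal_apply c one_ne_zero]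
    exact ENNReal.mul_ne_top ENNReal.ofReal_ne_top (measure_ne_top _ _)
  rw [← setLIntegral_eq_of_support_subset hsupp,
    lintegral_sub ((measurable_gaussianPDF c 1).const_mul _) hfin
      ((ae_restrict_iff' measurableSet_Iic).2 (ae_of_all _ hle)),
    lintegral_const_mul _ (measurable_gaussianPDF c 1), ← gaussianReal_apply 0 one_ne_zero,
    ← gaussianReal_apply c one_ne_zero, gaussianReal_Iic, gaussianReal_Iic, sub_zero,
    ← ENNReal.ofReal_mul (exp_nonneg _),
    ← ENNReal.ofReal_sub _ (q := exp ε * stdNormalCDF (t - c))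
      (mul_nonneg (exp_nonneg ε) ENNReal.toReal_nonneg),
    htc, gdpCurve]

lemma privacyIneq_gaussianReal_of_pos {c : ℝ} (hc : 0 < c) (ε : ℝ) :
    PrivacyIneq ε (gdpCurve c ε) (gaussianReal 0 1) (gaussianReal c 1) := fun S hS => by
  rw [gaussianReal_of_var_ne_zero _ one_ne_zero, gaussianReal_of_var_ne_zero _ one_ne_zero,
    ← lintegral_gaussianPDF_tsub hc]
  exact withDensity_apply_le_mul_add_lintegral_tsub _ _ (measurable_gaussianPDF c 1) _ hS

lemma hasDerivAt_gdpCurve {m : ℝ} (hm : m ≠ 0) (ε : ℝ) :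
    HasDerivAt (gdpCurve · ε) (gaussianPDFReal 0 1 (-ε / m + m / 2)) m := by
  have hinv : HasDerivAt (fun m : ℝ => -ε / m) (ε / m ^ 2) m := by
    simpa [div_eq_mul_inv, neg_mul, mul_neg] using (hasDerivAt_inv hm).const_mul (-ε)
  have hhalf : HasDerivAt (fun m : ℝ => m / 2) (1 / 2) m := (hasDerivAt_id m).div_const 2
  have hd := ((hasDerivAt_stdNormalCDF _).comp m (hinv.add hhalf)).sub
    (((hasDerivAt_stdNormalCDF _).comp m (hinv.sub hhalf)).const_mul (exp ε))
  -- makes the `ε / m ^ 2` parts of the two chain-rule terms cancel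
  have hcancel : exp ε * gaussianPDFReal 0 1 (-ε / m - m / 2) =
      gaussianPDFReal 0 1 (-ε / m + m / 2) := by
    rw [show -ε / m - m / 2 = -ε / m + m / 2 - m by ring, gaussianPDFReal_sub, zero_add,
      gaussianPDFReal_eq_exp_mul, ← mul_assoc, ← exp_add,
      show ε + (m * (-ε / m + m / 2) - m ^ 2 / 2) = 0 by field_simp; ring, exp_zero, one_mul]
  refine hd.congr_deriv ?_
  simp only [Pi.add_apply, Pi.sub_apply]
  linear_combination (1 / 2 - ε / m ^ 2) * hcancel

lemma gdpCurve_strictMonoOn (ε : ℝ) : StrictMonoOn (gdpCurve · ε) (Ioi 0) := by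
  refine strictMonoOn_of_deriv_pos (convex_Ioi 0)
    (fun m hm => (hasDerivAt_gdpCurve (ne_of_gt hm) ε).continuousAt.continuousWithinAt)
    fun m hm => ?_
  rw [interior_Ioi] at hm
  rw [(hasDerivAt_gdpCurve (ne_of_gt hm) ε).deriv]
  exact gaussianPDFReal_pos _ _ _ one_ne_zero

lemma privacyIneq_gaussianReal {μ ε c : ℝ} (hε : 0 ≤ ε) (hc : |c| ≤ μ) :
    PrivacyIneq ε (gdpCurve μ ε) (gaussianReal 0 1) (gaussianReal c 1) := by
  have of_pos : ∀ c, 0 < c → c ≤ μ →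
      PrivacyIneq ε (gdpCurve μ ε) (gaussianReal 0 1) (gaussianReal c 1) := fun c hc hcμ =>
    (privacyIneq_gaussianReal_of_pos hc ε).mono
      ((gdpCurve_strictMonoOn ε).monotoneOn hc (hc.trans_le hcμ) hcμ)
  rcases lt_trichotomy c 0 with hneg | rfl | hpos
  · simpa only [gaussianReal_map_neg, neg_zero, neg_neg] using
      (of_pos (-c) (neg_pos.2 hneg) ((neg_le_abs c).trans hc)).map measurable_neg
  · exact PrivacyIneq.refl hε _
  · exact of_pos c hpos ((le_abs_self c).trans hc)

lemma gaussianReal_map_const_mul_add (s a m : ℝ) (v : ℝ≥0) :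
    (gaussianReal m v).map (fun x => s * x + a) =
      gaussianReal (s * m + a) (.mk (s ^ 2) (sq_nonneg s) * v) := by
  rw [← gaussianReal_map_add_const, ← gaussianReal_map_const_mul,
    Measure.map_map (measurable_add_const a) (measurable_const_mul s)]
  rfl

/-- The Gaussian mechanism with noise scale σ = Δ/μ is μ-GDP. -/
theorem gaussian_mechanism_gdp
    (Δ μ : ℝ) (hΔ : 0 < Δ) (hμ : 0 < μ) (σ : ℝ) (hσ : σ = Δ / μ)
    (a b : ℝ) (hab : |a - b| ≤ Δ)
    (ε : ℝ) (hε : 0 ≤ ε)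
    (S : Set ℝ) (hS : MeasurableSet S) :
    gaussianReal a ⟨σ ^ 2, sq_nonneg σ⟩ S ≤
      ENNReal.ofReal (Real.exp ε) * gaussianReal b ⟨σ ^ 2, sq_nonneg σ⟩ S +
        ENNReal.ofReal (gdpCurve μ ε) := by
  have hσ0 : 0 < σ := hσ ▸ div_pos hΔ hμ
  have hc : |(b - a) / σ| ≤ μ := by
    rwa [abs_div, abs_of_pos hσ0, div_le_iff₀ hσ0, abs_sub_comm, hσ, mul_div_cancel₀ _ hμ.ne']
  have h := (privacyIneq_gaussianReal hε hc).map
    (by fun_prop : Measurable fun x : ℝ => σ * x + a)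
  rw [gaussianReal_map_const_mul_add, gaussianReal_map_const_mul_add, mul_zero, zero_add,
    mul_div_cancel₀ _ hσ0.ne', sub_add_cancel, mul_one] at h
  exact h S hS
end

section
/- Let (X, 𝒜) and (Y, ℬ) be measurable spaces, let P and Q be probability measures on X, let κ be a Markov kernel from X to Y, let ε ≥ 0 and δ ≥ 0, and suppose P(S) ≤ e^ε · Q(S) + δ for every measurable S ⊆ X. Then the compositions satisfy (P.bind κ)(T) ≤ e^ε · (Q.bind κ)(T) + δ for every measurable T ⊆ Y, where (P.bind κ)(T) = ∫ κ(x)(T) dP(x). (Post-processing immunity of (ε, δ)-differential privacy under randomised post-processing.) -/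
/-!
By the layer-cake formula, integrating a function `f` with values in `[0, 1]` against a measure
amounts to averaging the measures of the superlevel sets `{f > t}` over `t ∈ (0, 1]`, a
probability average. An inequality `μ S ≤ c ν S + d` between set measures therefore passes to
`∫ f dμ ≤ c ∫ f dν + d`, and `(P.bind κ) T = ∫ κ(x)(T) dP(x)` is such an integral.
-/

open MeasureTheory ProbabilityTheory Set
open scoped ENNReal

section LayerCake

variable {α : Type*} [MeasurableSpace α]

theorem lintegral_ofReal_eq_setLIntegral_Ioc_meas_lt (μ : Measure α) {f : α → ℝ}
    (hf : Measurable f) (hf0 : 0 ≤ f) (hf1 : f ≤ 1) :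
    ∫⁻ x, ENNReal.ofReal (f x) ∂μ = ∫⁻ t in Ioc 0 1, μ {x | t < f x} := by
  have hvanish : ∀ t ∈ Ioi (1 : ℝ), μ {x | t < f x} = 0 := fun t ht => by
    have hempty : {x | t < f x} = ∅ :=
      eq_empty_of_forall_notMem fun x hx => (hx.trans_le (hf1 x)).not_gt ht
    rw [hempty, measure_empty]
  rw [lintegral_eq_lintegral_meas_lt μ (.of_forall hf0) hf.aemeasurable,
    ← Ioc_union_Ioi_eq_Ioi zero_le_one, lintegral_union measurableSet_Ioi Ioc_disjoint_Ioi_same,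
    setLIntegral_congr_fun measurableSet_Ioi hvanish, lintegral_zero, add_zero]

theorem lintegral_le_mul_lintegral_add_of_forall_measure_le {μ ν : Measure α} {c d : ℝ≥0∞}
    (h : ∀ s, MeasurableSet s → μ s ≤ c * ν s + d) {f : α → ℝ≥0∞} (hf : Measurable f)
    (hf1 : f ≤ 1) :
    ∫⁻ x, f x ∂μ ≤ c * ∫⁻ x, f x ∂ν + d := by
  set g : α → ℝ := fun x => (f x).toReal
  have hfg : f = fun x => ENNReal.ofReal (g x) := funext fun x =>
    (ENNReal.ofReal_toReal (ne_top_of_le_ne_top ENNReal.one_ne_top (hf1 x))).symm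
  have hg : Measurable g := hf.ennreal_toReal
  have hg1 : g ≤ 1 := fun x => ENNReal.toReal_le_of_le_ofReal zero_le_one (by simpa using hf1 x)
  have hν_mono : Antitone fun t : ℝ => ν {x | t < g x} :=
    fun _ _ hst => measure_mono fun _ hx => hst.trans_lt hx
  rw [hfg, lintegral_ofReal_eq_setLIntegral_Ioc_meas_lt μ hg (fun _ => ENNReal.toReal_nonneg) hg1,
    lintegral_ofReal_eq_setLIntegral_Ioc_meas_lt ν hg (fun _ => ENNReal.toReal_nonneg) hg1]
  calc ∫⁻ t in Ioc 0 1, μ {x | t < g x}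
      ≤ ∫⁻ t in Ioc 0 1, (c * ν {x | t < g x} + d) :=
        lintegral_mono fun t => h _ (measurableSet_lt measurable_const hg)
    _ = c * (∫⁻ t in Ioc 0 1, ν {x | t < g x}) + d := by
        rw [lintegral_add_right _ measurable_const, lintegral_const_mul _ hν_mono.measurable,
          setLIntegral_const, Real.volume_Ioc, sub_zero, ENNReal.ofReal_one, mul_one]

end LayerCake

theorem dp_post_processing_randomised_general
    {X Y : Type*} [MeasurableSpace X] [MeasurableSpace Y]
    (P Q : Measure X)
    (κ : Kernel X Y) [IsMarkovKernel κ]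
    (ε δ : ℝ)
    (h : ∀ S : Set X, MeasurableSet S →
      P S ≤ ENNReal.ofReal (Real.exp ε) * Q S + ENNReal.ofReal δ)
    (T : Set Y) (hT : MeasurableSet T) :
    (P.bind fun x => κ x) T ≤
      ENNReal.ofReal (Real.exp ε) * (Q.bind fun x => κ x) T + ENNReal.ofReal δ := by
  rw [Measure.bind_apply hT κ.aemeasurable, Measure.bind_apply hT κ.aemeasurable]
  exact lintegral_le_mul_lintegral_add_of_forall_measure_le h (κ.measurable_coe hT)
    fun _ => prob_le_one

/-- Post-processing immunity of (ε, δ)-differential privacy under randomised post-processing: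
if P(S) ≤ e^ε Q(S) + δ for all measurable S, then composing with a Markov kernel κ preserves
the inequality. -/
theorem dp_post_processing_randomised
    {X Y : Type*} [MeasurableSpace X] [MeasurableSpace Y]
    (P Q : Measure X) [IsProbabilityMeasure P] [IsProbabilityMeasure Q]
    (κ : Kernel X Y) [IsMarkovKernel κ]
    (ε δ : ℝ) (hε : 0 ≤ ε) (hδ : 0 ≤ δ)
    (h : ∀ S : Set X, MeasurableSet S →
      P S ≤ ENNReal.ofReal (Real.exp ε) * Q S + ENNReal.ofReal δ)
    (T : Set Y) (hT : MeasurableSet T) :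
    (P.bind fun x => κ x) T ≤
      ENNReal.ofReal (Real.exp ε) * (Q.bind fun x => κ x) T + ENNReal.ofReal δ :=
  dp_post_processing_randomised_general P Q κ ε δ h T hT
end

section
/- Let Δ > 0, 0 < ε ≤ 1, 0 < δ < 1, and set σ = (Δ/ε)·√(2 ln(2/δ)). Then for all a, b ∈ ℝ with |a − b| ≤ Δ and every measurable set S ⊆ ℝ, the Gaussian measures with variance σ² satisfy N(a, σ²)(S) ≤ e^ε · N(b, σ²)(S) + δ. (The classical Gaussian mechanism bound underlying the functional mechanism of Hall et al.: noise multiplier c = (Δ/ε)·√(2 ln(2/δ)) yields (ε, δ)-DP for ε ≤ 1.) -/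
/-!
The privacy loss `log (p_a / p_b) x = ((x - b)² - (x - a)²) / (2σ²)` of the two Gaussian densities
is at most `ε` outside the one-sided tail `{x | |a - b| T < (a - b)(x - a)}`, where
`T = σ²ε/Δ - Δ/2`. Under `N(a, σ²)` this tail is a Gaussian tail of `(a - b)(X - a)`, so the
Chernoff bound gives it mass at most `exp (-T² / (2σ²))`, and the choice of `σ` makes this `≤ δ`.
-/

open MeasureTheory ProbabilityTheory

open Real
open scoped NNReal

namespace ProbabilityTheory

lemma hasSubgaussianMGF_sub_gaussianReal (μ : ℝ) (v : ℝ≥0) :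
    HasSubgaussianMGF (fun x ↦ x - μ) v (gaussianReal μ v) := by
  rw [← HasSubgaussianMGF.id_map_iff (by fun_prop), gaussianReal_map_sub_const, sub_self]
  exact ⟨fun t ↦ integrable_exp_mul_gaussianReal t, fun t ↦ by simp [mgf_id_gaussianReal]⟩

lemma gaussianReal_setOf_lt_mul_sub_le (a d : ℝ) (v : ℝ≥0) {t : ℝ} (ht : 0 ≤ t) :
    gaussianReal a v {x | |d| * t < d * (x - a)} ≤ ENNReal.ofReal (exp (-t ^ 2 / (2 * v))) := by
  rcases eq_or_ne d 0 with rfl | hd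
  · simp
  have hchernoff := ((hasSubgaussianMGF_sub_gaussianReal a v).const_mul d).measure_ge_le
    (mul_nonneg (abs_nonneg d) ht)
  change _ ≤ exp (-(|d| * t) ^ 2 / (2 * (d ^ 2 * v))) at hchernoff
  have hexponent : (|d| * t) ^ 2 / (2 * (d ^ 2 * v)) = t ^ 2 / (2 * v) := by
    rw [mul_pow, sq_abs, mul_left_comm,
      mul_div_mul_left _ _ (pow_ne_zero 2 hd)]
  rw [neg_div, hexponent, ← neg_div] at hchernoff
  calc gaussianReal a v {x | |d| * t < d * (x - a)}
      ≤ gaussianReal a v {x | |d| * t ≤ d * (x - a)} :=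
        measure_mono (Set.ofPred_subset_ofPred.2 fun _ ↦ le_of_lt)
    _ = ENNReal.ofReal ((gaussianReal a v).real {x | |d| * t ≤ d * (x - a)}) :=
      (ofReal_measureReal).symm
    _ ≤ ENNReal.ofReal (exp (-t ^ 2 / (2 * v))) := ENNReal.ofReal_le_ofReal hchernoff

noncomputable def gaussianPrivacyLoss (a b : ℝ) (v : ℝ≥0) (x : ℝ) : ℝ :=
  ((x - b) ^ 2 - (x - a) ^ 2) / (2 * v)

lemma gaussianPDFReal_eq_exp_privacyLoss_mul (a b : ℝ) (v : ℝ≥0) (x : ℝ) :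
    gaussianPDFReal a v x = exp (gaussianPrivacyLoss a b v x) * gaussianPDFReal b v x := by
  rw [gaussianPDFReal, gaussianPDFReal, mul_left_comm, ← exp_add, gaussianPrivacyLoss]
  congr 2
  ring

lemma gaussianReal_le_exp_mul_of_privacyLoss_le {a b ε : ℝ} {v : ℝ≥0} (hv : v ≠ 0) {A : Set ℝ}
    (hA : ∀ x ∈ A, gaussianPrivacyLoss a b v x ≤ ε) :
    gaussianReal a v A ≤ ENNReal.ofReal (exp ε) * gaussianReal b v A := by
  rw [gaussianReal_apply _ hv, gaussianReal_apply _ hv,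
    ← lintegral_const_mul _ (measurable_gaussianPDF b v)]
  refine setLIntegral_mono ((measurable_gaussianPDF b v).const_mul _) fun x hx ↦ ?_
  rw [gaussianPDF, gaussianPDF, ← ENNReal.ofReal_mul (exp_nonneg ε),
    gaussianPDFReal_eq_exp_privacyLoss_mul a b]
  gcongr
  · exact gaussianPDFReal_nonneg b v x
  · exact hA x hx

lemma gaussianPrivacyLoss_le_of_not_lt {a b x Δ ε : ℝ} {v : ℝ≥0} (hv : v ≠ 0) (hΔ : 0 < Δ)
    (hε : 0 ≤ ε) (hab : |a - b| ≤ Δ)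
    (hx : ¬ |a - b| * (v * ε / Δ - Δ / 2) < (a - b) * (x - a)) :
    gaussianPrivacyLoss a b v x ≤ ε := by
  have hv' : (0 : ℝ) < v := by positivity
  have hscale : |a - b| * (v * ε / Δ) ≤ v * ε := by
    rw [mul_div_assoc', mul_comm, mul_div_assoc]
    exact mul_le_of_le_one_right (by positivity) ((div_le_one hΔ).2 hab)
  rw [gaussianPrivacyLoss, div_le_iff₀ (by positivity)]
  nlinarith [sq_abs (a - b), abs_nonneg (a - b)]

end ProbabilityTheory

lemma gaussian_mechanism_threshold_bounds {Δ ε δ σ : ℝ} (hΔ : 0 < Δ) (hε0 : 0 < ε) (hε1 : ε ≤ 1)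
    (hδ0 : 0 < δ) (hδ1 : δ < 1) (hσ : σ = Δ / ε * √(2 * log (2 / δ))) :
    0 ≤ σ ^ 2 * ε / Δ - Δ / 2 ∧ exp (-(σ ^ 2 * ε / Δ - Δ / 2) ^ 2 / (2 * σ ^ 2)) ≤ δ := by
  set L := log (2 / δ)
  have hL : log 2 ≤ L := log_le_log two_pos (by rw [le_div_iff₀ hδ0]; linarith)
  have hlog2 : 1 / 2 < log 2 := by linarith [log_two_gt_d9]
  have hL0 : 0 < L := by linarith
  have hσ2 : σ ^ 2 = 2 * L * (Δ / ε) ^ 2 := by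
    rw [hσ, mul_pow, sq_sqrt (by linarith)]
    ring
  have hT : σ ^ 2 * ε / Δ - Δ / 2 = Δ * (4 * L - ε) / (2 * ε) := by
    rw [hσ2]
    field_simp
    ring
  -- the exponent is at least `L - ε / 2 ≥ L - log 2 = -log δ`
  have hexponent : (σ ^ 2 * ε / Δ - Δ / 2) ^ 2 / (2 * σ ^ 2) = L - ε / 2 + ε ^ 2 / (16 * L) := by
    rw [hT, hσ2]
    field_simp
    ring
  have hlogδ : log δ = log 2 - L := by
    simp only [L, Real.log_div two_ne_zero hδ0.ne']
    ring
  refine ⟨by rw [hT]; exact div_nonneg (mul_nonneg hΔ.le (by linarith)) (by positivity), ?_⟩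
  calc exp (-(σ ^ 2 * ε / Δ - Δ / 2) ^ 2 / (2 * σ ^ 2))
      ≤ exp (log δ) := by
        rw [exp_le_exp, neg_div, hexponent, hlogδ]
        linarith [show 0 ≤ ε ^ 2 / (16 * L) by positivity]
    _ = δ := exp_log hδ0

theorem classical_gaussian_mechanism_general
    (Δ ε δ : ℝ) (hΔ : 0 < Δ) (hε0 : 0 < ε) (hε1 : ε ≤ 1) (hδ0 : 0 < δ) (hδ1 : δ < 1)
    (σ : ℝ) (hσ : σ = Δ / ε * Real.sqrt (2 * Real.log (2 / δ)))
    (a b : ℝ) (hab : |a - b| ≤ Δ)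
    (S : Set ℝ) :
    gaussianReal a ⟨σ ^ 2, sq_nonneg σ⟩ S ≤
      ENNReal.ofReal (Real.exp ε) * gaussianReal b ⟨σ ^ 2, sq_nonneg σ⟩ S +
        ENNReal.ofReal δ := by
  obtain ⟨hT, htail⟩ := gaussian_mechanism_threshold_bounds hΔ hε0 hε1 hδ0 hδ1 hσ
  set v : ℝ≥0 := ⟨σ ^ 2, sq_nonneg σ⟩
  have hv : v ≠ 0 := by
    rintro hv
    have hσ0 : σ ^ 2 = 0 := congrArg NNReal.toReal hv
    rw [hσ0, zero_mul, zero_div] at hT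
    linarith
  set B := {x | |a - b| * (σ ^ 2 * ε / Δ - Δ / 2) < (a - b) * (x - a)}
  have hgood : gaussianReal a v (S \ B) ≤ ENNReal.ofReal (exp ε) * gaussianReal b v (S \ B) :=
    gaussianReal_le_exp_mul_of_privacyLoss_le hv fun x hx ↦
      gaussianPrivacyLoss_le_of_not_lt hv hΔ hε0.le hab hx.2
  have hbad : gaussianReal a v B ≤ ENNReal.ofReal δ :=
    (gaussianReal_setOf_lt_mul_sub_le a (a - b) v hT).trans (ENNReal.ofReal_le_ofReal htail)
  calc gaussianReal a v S ≤ gaussianReal a v (S \ B) + gaussianReal a v B :=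
        (measure_mono (Set.subset_sdiff_union _ _)).trans (measure_union_le _ _)
    _ ≤ ENNReal.ofReal (exp ε) * gaussianReal b v (S \ B) + ENNReal.ofReal δ :=
        add_le_add hgood hbad
    _ ≤ ENNReal.ofReal (exp ε) * gaussianReal b v S + ENNReal.ofReal δ := by
        gcongr
        exact Set.sdiff_subset

/-- The classical Gaussian mechanism bound of Hall et al.: for ε ≤ 1, noise scale
σ = (Δ/ε)√(2 ln(2/δ)) yields (ε, δ)-DP. -/
theorem classical_gaussian_mechanism
    (Δ ε δ : ℝ) (hΔ : 0 < Δ) (hε0 : 0 < ε) (hε1 : ε ≤ 1) (hδ0 : 0 < δ) (hδ1 : δ < 1)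
    (σ : ℝ) (hσ : σ = Δ / ε * Real.sqrt (2 * Real.log (2 / δ)))
    (a b : ℝ) (hab : |a - b| ≤ Δ)
    (S : Set ℝ) (hS : MeasurableSet S) :
    gaussianReal a ⟨σ ^ 2, sq_nonneg σ⟩ S ≤
      ENNReal.ofReal (Real.exp ε) * gaussianReal b ⟨σ ^ 2, sq_nonneg σ⟩ S +
        ENNReal.ofReal δ :=
  classical_gaussian_mechanism_general Δ ε δ hΔ hε0 hε1 hδ0 hδ1 σ hσ a b hab S
end
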